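/- Let 𝒳, 𝒴, 𝒮 be finite nonempty sets and let T assign to each i,k ∈ 𝒮, y ∈ 𝒴, x ∈ 𝒳 a nonnegative real T_{ik}^{y|x} with ∑_{k∈𝒮} ∑_{y∈𝒴} T_{ik}^{y|x} = 1 for every i ∈ 𝒮 and x ∈ 𝒳. For each i ∈ 𝒮 let s_i be the unit vector in the real Euclidean space indexed by functions g : 𝒳 → 𝒴 × 𝒮 with coordinate ∏_{x∈𝒳} √(T_{i,(g x).2}^{(g x).1 | x}) at g. Suppose T is step-wise inefficient: there exist i ≠ j in 𝒮 such that for every x ∈ 𝒳 there exist y ∈ 𝒴 and k ∈ 𝒮 with T_{ik}^{y|x} > 0 and T_{jk}^{y|x} > 0. Let p : 𝒮 → ℝ satisfy p_i > 0 for all i and ∑_i p_i = 1, and let ρ = ∑_{i∈𝒮} p_i · s_i s_iᵀ (a real symmetric matrix) with eigenvalues μ_k. Then −∑_k μ_k log μ_k < −∑_{i∈𝒮} p_i log p_i. -/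

import Mathlib

/-!
Let `e_k` be an orthonormal eigenbasis of `ρ` with eigenvalues `μ_k`. The weights
`q k i = p i * ⟪s i, e k⟫ ^ 2` couple the two distributions: their row sums are the `μ k` and
their column sums the `p i`. Hence `∑ μ log μ - ∑ p log p = ∑ q (log μ - log p)`, which by
`log x ≤ x - 1` is at least `∑ i, p i * (1 - ∑ k, q k i / μ k)`. Each bracket is nonnegative
since `ρ ≥ p i • |s i⟩⟨s i|` forces `p i * ⟪s i, ρ⁺ s i⟫ ≤ 1`. Equality would force
`μ k = p i` whenever `⟪s i, e k⟫ ≠ 0`, hence `⟪s i, ρ s i⟫ = p i`; but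
`⟪s i, ρ s i⟫ = ∑ l, p l * ⟪s l, s i⟫ ^ 2` exceeds `p i` as soon as `s i` overlaps another
causal state, as step-wise inefficiency provides.
-/

open Matrix Real Finset
open scoped RealInnerProductSpace

theorem one_sub_div_le_log_sub_log {a b : ℝ} (ha : 0 < a) (hb : 0 < b) :
    1 - b / a ≤ log a - log b := by
  have := one_sub_inv_le_log_of_pos (div_pos ha hb)
  rwa [inv_div, log_div ha.ne' hb.ne'] at this

theorem one_sub_div_lt_log_sub_log {a b : ℝ} (ha : 0 < a) (hb : 0 < b) (hab : a ≠ b) :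
    1 - b / a < log a - log b := by
  have := log_lt_sub_one_of_pos (div_pos hb ha)
    (by rwa [ne_eq, div_eq_one_iff_eq ha.ne', eq_comm])
  rw [log_div hb.ne' ha.ne'] at this
  linarith

theorem sum_mul_log_lt_sum_mul_log_of_coupling {κ ι : Type*} [Fintype κ] [Fintype ι]
    {q : κ → ι → ℝ} {μ : κ → ℝ} {p : ι → ℝ} (hq : ∀ k i, 0 ≤ q k i)
    (hrow : ∀ k, ∑ i, q k i = μ k) (hcol : ∀ i, ∑ k, q k i = p i)
    (hdiv : ∀ i, ∑ k, q k i / μ k ≤ 1) (hne : ∃ k i, 0 < q k i ∧ μ k ≠ p i) :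
    ∑ i, p i * log (p i) < ∑ k, μ k * log (μ k) := by
  have hle_row : ∀ k i, q k i ≤ μ k := fun k i =>
    hrow k ▸ single_le_sum (fun i _ => hq k i) (mem_univ i)
  have hle_col : ∀ k i, q k i ≤ p i := fun k i =>
    hcol i ▸ single_le_sum (fun k _ => hq k i) (mem_univ k)
  have hpt : ∀ k i, q k i * (1 - p i / μ k) ≤ q k i * (log (μ k) - log (p i)) := by
    intro k i
    rcases (hq k i).eq_or_lt with h | h
    · simp [← h]
    · exact mul_le_mul_of_nonneg_left
        (one_sub_div_le_log_sub_log (h.trans_le (hle_row k i)) (h.trans_le (hle_col k i))) h.le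
  have hcolumn : ∀ i, 0 ≤ ∑ k, q k i * (1 - p i / μ k) := by
    intro i
    have hp : 0 ≤ p i := hcol i ▸ sum_nonneg fun k _ => hq k i
    have : ∑ k, q k i * (1 - p i / μ k) = p i * (1 - ∑ k, q k i / μ k) := by
      simp only [mul_sub, mul_one, sum_sub_distrib, hcol, mul_sum]
      congr 1
      exact sum_congr rfl fun k _ => by ring
    rw [this]
    exact mul_nonneg hp (sub_nonneg.mpr (hdiv i))
  have hsplit : ∑ k, μ k * log (μ k) - ∑ i, p i * log (p i) =
      ∑ i, ∑ k, q k i * (log (μ k) - log (p i)) := by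
    simp only [mul_sub, sum_sub_distrib]
    rw [sum_comm]
    simp only [← sum_mul, hrow, hcol]
  obtain ⟨k₀, i₀, hq₀, hne₀⟩ := hne
  have hlt : ∑ i, ∑ k, q k i * (1 - p i / μ k) < ∑ i, ∑ k, q k i * (log (μ k) - log (p i)) :=
    sum_lt_sum (fun i _ => sum_le_sum fun k _ => hpt k i)
      ⟨i₀, mem_univ _, sum_lt_sum (fun k _ => hpt k i₀) ⟨k₀, mem_univ _,
        mul_lt_mul_of_pos_left (one_sub_div_lt_log_sub_log (hq₀.trans_le (hle_row k₀ i₀))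
          (hq₀.trans_le (hle_col k₀ i₀)) hne₀) hq₀⟩⟩
  linarith [sum_nonneg fun i (_ : i ∈ univ) => hcolumn i]

theorem Matrix.IsHermitian.inner_toEuclideanLin_self {n : Type*} [Fintype n] [DecidableEq n]
    {A : Matrix n n ℝ} (hA : A.IsHermitian) (u : EuclideanSpace ℝ n) :
    ⟪u, A.toEuclideanLin u⟫ = ∑ k, hA.eigenvalues k * ⟪u, hA.eigenvectorBasis k⟫ ^ 2 := by
  have heig : ∀ k, A.toEuclideanLin (hA.eigenvectorBasis k) =
      hA.eigenvalues k • hA.eigenvectorBasis k := fun k => by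
    rw [toLpLin_apply, hA.mulVec_eigenvectorBasis]
    rfl
  rw [← hA.eigenvectorBasis.sum_inner_mul_inner u (A.toEuclideanLin u)]
  refine sum_congr rfl fun k _ => ?_
  rw [← isSymmetric_toEuclideanLin_iff.mpr hA, heig, real_inner_smul_left, real_inner_comm u]
  ring

section Mixture

variable {ι n : Type*} [Fintype ι] [Fintype n] [DecidableEq n]

def mixture (s : ι → EuclideanSpace ℝ n) (p : ι → ℝ) : Matrix n n ℝ :=
  ∑ i, p i • vecMulVec (s i) (s i)

theorem inner_toEuclideanLin_mixture_self (s : ι → EuclideanSpace ℝ n) (p : ι → ℝ)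
    (u : EuclideanSpace ℝ n) :
    ⟪u, (mixture s p).toEuclideanLin u⟫ = ∑ i, p i * ⟪s i, u⟫ ^ 2 := by
  simp only [mixture, toLpLin_apply, sum_mulVec, smul_mulVec, vecMulVec_mulVec,
    EuclideanSpace.inner_eq_star_dotProduct, sum_dotProduct, smul_dotProduct, star_trivial,
    op_smul_eq_smul, smul_eq_mul]
  refine sum_congr rfl fun i _ => ?_
  rw [dotProduct_comm (s i).ofLp]
  ring

variable {s : ι → EuclideanSpace ℝ n} {p : ι → ℝ} (hρ : (mixture s p).IsHermitian)

theorem sum_eigenvalues_mul_inner_sq (u : EuclideanSpace ℝ n) :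
    ∑ k, hρ.eigenvalues k * ⟪u, hρ.eigenvectorBasis k⟫ ^ 2 = ∑ i, p i * ⟪s i, u⟫ ^ 2 := by
  rw [← hρ.inner_toEuclideanLin_self, inner_toEuclideanLin_mixture_self]

theorem sum_mul_inner_eigenvectorBasis_sq (k : n) :
    ∑ i, p i * ⟪s i, hρ.eigenvectorBasis k⟫ ^ 2 = hρ.eigenvalues k := by
  rw [← sum_eigenvalues_mul_inner_sq hρ]
  simp [orthonormal_iff_ite.mp hρ.eigenvectorBasis.orthonormal]

/-- `p i * ⟪s i, ρ⁺ s i⟫ ≤ 1`, written in the eigenbasis of `ρ`. -/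
theorem sum_mul_inner_sq_div_eigenvalues_le_one (hp : ∀ i, 0 ≤ p i) (i : ι) :
    ∑ k, p i * ⟪s i, hρ.eigenvectorBasis k⟫ ^ 2 / hρ.eigenvalues k ≤ 1 := by
  have hμ : ∀ k, 0 ≤ hρ.eigenvalues k := fun k => by
    rw [← sum_mul_inner_eigenvectorBasis_sq hρ]
    exact sum_nonneg fun i _ => mul_nonneg (hp i) (sq_nonneg _)
  set e := hρ.eigenvectorBasis
  set c := ∑ k, ⟪s i, e k⟫ ^ 2 / hρ.eigenvalues k
  -- `w = ρ⁺ s i`, with `x / 0 = 0` accounting for the kernel of `ρ`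
  set w := ∑ k, (⟪s i, e k⟫ / hρ.eigenvalues k) • e k
  have hwe : ∀ k, ⟪w, e k⟫ = ⟪s i, e k⟫ / hρ.eigenvalues k := fun k =>
    e.orthonormal.inner_left_fintype _ k
  have hsw : ⟪s i, w⟫ = c := by
    simp only [w, c, inner_sum, real_inner_smul_right]
    exact sum_congr rfl fun k _ => by ring
  have hww : ∑ l, p l * ⟪s l, w⟫ ^ 2 = c := by
    rw [← sum_eigenvalues_mul_inner_sq hρ]
    refine sum_congr rfl fun k _ => ?_
    rw [hwe]
    rcases eq_or_ne (hρ.eigenvalues k) 0 with h | h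
    · simp [h]
    · field_simp
  have hc : p i * c ^ 2 ≤ c :=
    calc p i * c ^ 2 = p i * ⟪s i, w⟫ ^ 2 := by rw [hsw]
      _ ≤ ∑ l, p l * ⟪s l, w⟫ ^ 2 := single_le_sum (f := fun l => p l * ⟪s l, w⟫ ^ 2)
          (fun l _ => mul_nonneg (hp l) (sq_nonneg _)) (mem_univ i)
      _ = c := hww
  have hc₀ : 0 ≤ c := sum_nonneg fun k _ => div_nonneg (sq_nonneg _) (hμ k)
  calc ∑ k, p i * ⟪s i, e k⟫ ^ 2 / hρ.eigenvalues k = p i * c := by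
        simp only [c, mul_sum, mul_div_assoc]
    _ ≤ 1 := by
        rcases hc₀.eq_or_lt with h | h
        · simp [← h]
        · nlinarith

theorem lt_sum_eigenvalues_mul_inner_sq (hs : ∀ i, ‖s i‖ = 1) (hp : ∀ i, 0 < p i) {i j : ι}
    (hij : i ≠ j) (hsij : ⟪s i, s j⟫ ≠ 0) :
    p i < ∑ k, hρ.eigenvalues k * ⟪s i, hρ.eigenvectorBasis k⟫ ^ 2 := by
  classical
  rw [sum_eigenvalues_mul_inner_sq hρ]
  have hpair := sum_le_sum_of_subset_of_nonneg (subset_univ {i, j})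
    (f := fun l => p l * ⟪s l, s i⟫ ^ 2) fun l _ _ => mul_nonneg (hp l).le (sq_nonneg _)
  rw [sum_pair hij, real_inner_self_eq_norm_sq, hs, real_inner_comm] at hpair
  have : 0 < p j * ⟪s i, s j⟫ ^ 2 := mul_pos (hp j) (sq_pos_of_ne_zero hsij)
  linarith

theorem sum_mul_log_lt_sum_eigenvalues_mul_log (hs : ∀ i, ‖s i‖ = 1) (hp : ∀ i, 0 < p i)
    {i j : ι} (hij : i ≠ j) (hsij : ⟪s i, s j⟫ ≠ 0) :
    ∑ i, p i * log (p i) < ∑ k, hρ.eigenvalues k * log (hρ.eigenvalues k) := by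
  have hcol : ∀ i, ∑ k, p i * ⟪s i, hρ.eigenvectorBasis k⟫ ^ 2 = p i := fun i => by
    rw [← mul_sum, hρ.eigenvectorBasis.sum_sq_inner_left, hs, one_pow, mul_one]
  refine sum_mul_log_lt_sum_mul_log_of_coupling (fun k i => mul_nonneg (hp i).le (sq_nonneg _))
    (sum_mul_inner_eigenvectorBasis_sq hρ) hcol
    (sum_mul_inner_sq_div_eigenvalues_le_one hρ fun i => (hp i).le) ?_
  by_contra! heq
  refine (lt_sum_eigenvalues_mul_inner_sq hρ hs hp hij hsij).ne' ?_
  rw [← hcol i]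
  refine sum_congr rfl fun k _ => ?_
  rcases eq_or_ne ⟪s i, hρ.eigenvectorBasis k⟫ 0 with h | h
  · simp [h]
  · rw [heq k i (mul_pos (hp i) (sq_pos_of_ne_zero h))]

end Mixture

theorem inner_eq_prod_sum_of_apply_eq_prod {X Z : Type*} [Fintype X] [DecidableEq X] [Fintype Z]
    {u v : EuclideanSpace ℝ (X → Z)} {f f' : X → Z → ℝ} (hu : ∀ g, u g = ∏ x, f x (g x))
    (hv : ∀ g, v g = ∏ x, f' x (g x)) :
    ⟪u, v⟫ = ∏ x, ∑ z, f x z * f' x z := by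
  simp only [EuclideanSpace.inner_eq_star_dotProduct, star_trivial, dotProduct, hu, hv,
    ← prod_mul_distrib]
  rw [Fintype.prod_sum]
  exact sum_congr rfl fun g _ => prod_congr rfl fun x _ => mul_comm _ _

section Transducer

variable {𝒳 𝒴 𝒮 : Type*} [Fintype 𝒳] [DecidableEq 𝒳] [Fintype 𝒴] [Fintype 𝒮]
  {T : 𝒮 → 𝒮 → 𝒴 → 𝒳 → ℝ} {s : 𝒮 → EuclideanSpace ℝ (𝒳 → 𝒴 × 𝒮)}

theorem norm_eq_one_of_stochastic (hT : ∀ i k y x, 0 ≤ T i k y x)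
    (hstoch : ∀ i x, ∑ k, ∑ y, T i k y x = 1)
    (hs : ∀ i g, s i g = ∏ x, √(T i (g x).2 (g x).1 x)) (i : 𝒮) : ‖s i‖ = 1 := by
  have h : ⟪s i, s i⟫ = 1 := by
    rw [inner_eq_prod_sum_of_apply_eq_prod (f := fun x z => √(T i z.2 z.1 x))
      (f' := fun x z => √(T i z.2 z.1 x)) (hs i) (hs i)]
    refine prod_eq_one fun x _ => ?_
    simp only [mul_self_sqrt (hT _ _ _ _), Fintype.sum_prod_type]
    rw [sum_comm, hstoch]
  rwa [real_inner_self_eq_norm_sq, pow_eq_one_iff_of_nonneg (norm_nonneg _) two_ne_zero] at h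

theorem inner_pos_of_common_transition
    (hs : ∀ i g, s i g = ∏ x, √(T i (g x).2 (g x).1 x)) {i j : 𝒮}
    (hcommon : ∀ x, ∃ y k, 0 < T i k y x ∧ 0 < T j k y x) : 0 < ⟪s i, s j⟫ := by
  rw [inner_eq_prod_sum_of_apply_eq_prod (f := fun x z => √(T i z.2 z.1 x))
    (f' := fun x z => √(T j z.2 z.1 x)) (hs i) (hs j)]
  refine prod_pos fun x _ => ?_
  obtain ⟨y, k, hi, hj⟩ := hcommon x
  exact sum_pos' (fun z _ => by positivity)
    ⟨(y, k), mem_univ _, mul_pos (sqrt_pos.mpr hi) (sqrt_pos.mpr hj)⟩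

end Transducer

theorem stmt6_general {𝒳 𝒴 𝒮 : Type*} [Fintype 𝒳] [Fintype 𝒴] [Fintype 𝒮]
    [DecidableEq 𝒳] [DecidableEq 𝒴] [DecidableEq 𝒮]
    (T : 𝒮 → 𝒮 → 𝒴 → 𝒳 → ℝ) (hT : ∀ i k y x, 0 ≤ T i k y x)
    (hstoch : ∀ i x, ∑ k : 𝒮, ∑ y : 𝒴, T i k y x = 1)
    (s : 𝒮 → EuclideanSpace ℝ (𝒳 → 𝒴 × 𝒮))
    (hs : ∀ i g, s i g = ∏ x : 𝒳, Real.sqrt (T i (g x).2 (g x).1 x))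
    (hineff : ∃ i j : 𝒮, i ≠ j ∧
      ∀ x : 𝒳, ∃ y : 𝒴, ∃ k : 𝒮, 0 < T i k y x ∧ 0 < T j k y x)
    (p : 𝒮 → ℝ) (hp : ∀ i, 0 < p i)
    (ρ : Matrix (𝒳 → 𝒴 × 𝒮) (𝒳 → 𝒴 × 𝒮) ℝ)
    (hρdef : ρ = ∑ i, p i • Matrix.of (fun g g' => s i g * s i g'))
    (hρ : ρ.IsHermitian) :
    -∑ k, hρ.eigenvalues k * Real.log (hρ.eigenvalues k) <
      -∑ i, p i * Real.log (p i) := by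
  obtain ⟨i, j, hij, hcommon⟩ := hineff
  subst hρdef
  exact neg_lt_neg (sum_mul_log_lt_sum_eigenvalues_mul_log hρ
    (norm_eq_one_of_stochastic hT hstoch hs) hp hij
    (inner_pos_of_common_transition hs hcommon).ne')

/-- Reduced Complexity: For stochastic transition elements `T` that
are step-wise inefficient (two distinct causal states `i ≠ j` sharing, for every
input `x`, a common possible transition) and any strictly positive distribution
`p` on causal states, the von Neumann entropy of the mixture
`ρ = ∑ i, p i • |s i⟩⟨s i|` of quantum causal states is strictly less than the
Shannon entropy of `p`. -/
theorem stmt6 {𝒳 𝒴 𝒮 : Type*} [Fintype 𝒳] [Fintype 𝒴] [Fintype 𝒮]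
    [DecidableEq 𝒳] [DecidableEq 𝒴] [DecidableEq 𝒮]
    [Nonempty 𝒳] [Nonempty 𝒴] [Nonempty 𝒮]
    (T : 𝒮 → 𝒮 → 𝒴 → 𝒳 → ℝ) (hT : ∀ i k y x, 0 ≤ T i k y x)
    (hstoch : ∀ i x, ∑ k : 𝒮, ∑ y : 𝒴, T i k y x = 1)
    (s : 𝒮 → EuclideanSpace ℝ (𝒳 → 𝒴 × 𝒮))
    (hs : ∀ i g, s i g = ∏ x : 𝒳, Real.sqrt (T i (g x).2 (g x).1 x))
    (hineff : ∃ i j : 𝒮, i ≠ j ∧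
      ∀ x : 𝒳, ∃ y : 𝒴, ∃ k : 𝒮, 0 < T i k y x ∧ 0 < T j k y x)
    (p : 𝒮 → ℝ) (hp : ∀ i, 0 < p i) (hpsum : ∑ i, p i = 1)
    (ρ : Matrix (𝒳 → 𝒴 × 𝒮) (𝒳 → 𝒴 × 𝒮) ℝ)
    (hρdef : ρ = ∑ i, p i • Matrix.of (fun g g' => s i g * s i g'))
    (hρ : ρ.IsHermitian) :
    -∑ k, hρ.eigenvalues k * Real.log (hρ.eigenvalues k) <
      -∑ i, p i * Real.log (p i) :=
  stmt6_general T hT hstoch s hs hineff p hp ρ hρdef hρ
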